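/- Define N₅(η) := cosh(η)/sinh³(η) + 2(1 − coth η) for η > 0. Then N₅(η) > 0 for all sufficiently large η and lim_{η→∞} (1/η) · log N₅(η) = −4. -/

import Mathlib

/-!
With `x = e^{-η}` one has `N₅(η) = 4 x⁴ (3 - x²) / (1 - x²)³`: the terms of order `e^{-2η}` in
`cosh η / sinh³ η` and in `2 (1 - coth η)` cancel, so `N₅(η) ~ 12 e^{-4η}`, and any function
with `e^{aη} f(η)` converging to a positive limit has logarithmic decay rate `a`.
-/

open Real Filter

noncomputable def N₅ (η : ℝ) : ℝ :=
  Real.cosh η / Real.sinh η ^ 3 + 2 * (1 - Real.cosh η / Real.sinh η)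

open Topology

section ExponentialRate

variable {f : ℝ → ℝ} {a L : ℝ}

lemma eventually_pos_of_tendsto_exp_mul (hL : 0 < L)
    (hf : Tendsto (fun t => exp (a * t) * f t) atTop (𝓝 L)) : ∀ᶠ t in atTop, 0 < f t := by
  filter_upwards [hf.eventually (lt_mem_nhds hL)] with t ht
  exact pos_of_mul_pos_right ht (exp_pos _).le

lemma tendsto_inv_mul_log_of_tendsto_exp_mul (hL : 0 < L)
    (hf : Tendsto (fun t => exp (a * t) * f t) atTop (𝓝 L)) :
    Tendsto (fun t => 1 / t * log (f t)) atTop (𝓝 (-a)) := by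
  have hlog : Tendsto (fun t => 1 / t * log (exp (a * t) * f t) - a) atTop (𝓝 (0 * log L - a)) :=
    ((tendsto_const_nhds.div_atTop tendsto_id).mul
      ((continuousAt_log hL.ne').tendsto.comp hf)).sub_const a
  rw [zero_mul, zero_sub] at hlog
  refine hlog.congr' ?_
  filter_upwards [eventually_pos_of_tendsto_exp_mul hL hf, eventually_gt_atTop 0] with t hft ht
  rw [log_mul (exp_pos _).ne' hft.ne', log_exp]
  field_simp
  ring

end ExponentialRate

lemma exp_mul_N₅ {η : ℝ} (hη : 0 < η) :
    exp (4 * η) * N₅ η = 4 * (3 - exp (-η) ^ 2) / (1 - exp (-η) ^ 2) ^ 3 := by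
  set x := exp (-η) with hx
  have hx0 : 0 < x := exp_pos _
  have hx1 : x < 1 := exp_lt_one_iff.mpr (neg_lt_zero.mpr hη)
  have hexp : exp η = x⁻¹ := by rw [hx, exp_neg, inv_inv]
  have hsinh : sinh η = (1 - x ^ 2) / (2 * x) := by
    rw [sinh_eq, hexp, ← hx]
    field_simp
  have hcosh : cosh η = (1 + x ^ 2) / (2 * x) := by
    rw [cosh_eq, hexp, ← hx]
    field_simp
  have hexp4 : exp (4 * η) = (x ^ 4)⁻¹ := by
    rw [show (4 : ℝ) = (4 : ℕ) by norm_num, exp_nat_mul, hexp, inv_pow]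
  have hden : 1 - x ^ 2 ≠ 0 := by nlinarith
  rw [N₅, hsinh, hcosh, hexp4]
  field_simp
  ring

lemma tendsto_exp_mul_N₅ : Tendsto (fun η => exp (4 * η) * N₅ η) atTop (𝓝 12) := by
  have hR : Tendsto (fun x : ℝ => 4 * (3 - x ^ 2) / (1 - x ^ 2) ^ 3) (𝓝 0) (𝓝 12) := by
    have hcont : ContinuousAt (fun x : ℝ => 4 * (3 - x ^ 2) / (1 - x ^ 2) ^ 3) 0 := by
      fun_prop (disch := norm_num)
    convert hcont.tendsto using 2
    norm_num
  refine (hR.comp tendsto_exp_neg_atTop_nhds_zero).congr' ?_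
  filter_upwards [eventually_gt_atTop 0] with η hη using (exp_mul_N₅ hη).symm

/-- `N₅` is eventually positive and `lim_{η→∞} (1/η) log N₅(η) = -4`, i.e. the hitting
probability of a hyperbolic ball for the 5-dimensional hyperbolic Brownian motion decays
with exponential rate `n - 1 = 4`. -/
theorem hitting_decay_dim5 :
    (∀ᶠ η : ℝ in Filter.atTop, 0 < N₅ η) ∧
    Filter.Tendsto (fun η : ℝ => (1 / η) * Real.log (N₅ η)) Filter.atTop (nhds (-4)) :=
  ⟨eventually_pos_of_tendsto_exp_mul (by norm_num) tendsto_exp_mul_N₅,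
    tendsto_inv_mul_log_of_tendsto_exp_mul (by norm_num) tendsto_exp_mul_N₅⟩
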